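/- arXiv:2403.10958 — 6 statements merged into one kernel-verified Lean document; each statement's English description precedes it below -/
import Mathlib

section
/- The category of persistence modules of finite type (functors N_0 → vec with structure maps eventually isomorphisms) is equivalent to the category of finitely generated N_0-graded k[t]-modules. -/
open CategoryTheory

/-! The category of finitely generated `ℕ`-graded `k[t]`-modules.  A graded
`k[t]`-module is packaged as its family of graded pieces (each a `k`-vector space)
together with the action of `t` raising the degree by one; a morphism is a family
of degree-preserving linear maps commuting with the `t`-action. -/

/-- An `ℕ`-graded `k[t]`-module, given by its graded pieces and the action of `t`. -/
structure GrMod (k : Type) [Field k] where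
  piece : ℕ → Type
  [grp : ∀ n, AddCommGroup (piece n)]
  [mod : ∀ n, Module k (piece n)]
  act : ∀ n, piece n →ₗ[k] piece (n + 1)

attribute [instance] GrMod.grp GrMod.mod

variable {k : Type} [Field k]

/-- Iterated action of `t`, raising the degree by `j`. -/
noncomputable def GrMod.actIterAux (M : GrMod k) (a : ℕ) :
    (j : ℕ) → (M.piece a →ₗ[k] M.piece (a + j))
  | 0 => LinearMap.id
  | j + 1 => (M.act (a + j)) ∘ₗ (M.actIterAux a j)

/-- Iterated action of `t` from degree `a` to degree `b ≥ a`. -/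
noncomputable def GrMod.actIter (M : GrMod k) (a b : ℕ) (h : a ≤ b) :
    M.piece a →ₗ[k] M.piece b :=
  (Nat.add_sub_cancel' h) ▸ (M.actIterAux a (b - a))

/-- Finite generation of a graded `k[t]`-module: there are finitely many homogeneous
elements whose shifts under the `t`-action span every graded piece. -/
def GrMod.FG (M : GrMod k) : Prop :=
  ∃ s : Finset (Σ n : ℕ, M.piece n), ∀ (m : ℕ) (x : M.piece m),
    x ∈ Submodule.span k
      {y : M.piece m | ∃ g ∈ s, ∃ h : g.1 ≤ m, M.actIter g.1 m h g.2 = y}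

instance : Category (GrMod k) where
  Hom M N := {φ : ∀ n, M.piece n →ₗ[k] N.piece n //
    ∀ n, (N.act n) ∘ₗ (φ n) = (φ (n + 1)) ∘ₗ (M.act n)}
  id M := ⟨fun _ => LinearMap.id, by intro n; simp⟩
  comp φ ψ := ⟨fun n => (ψ.1 n) ∘ₗ (φ.1 n), by
    intro n
    rw [← LinearMap.comp_assoc, ψ.2 n, LinearMap.comp_assoc, φ.2 n, LinearMap.comp_assoc]⟩
  id_comp φ := by apply Subtype.ext; funext n; rfl
  comp_id φ := by apply Subtype.ext; funext n; rfl
  assoc φ ψ χ := by apply Subtype.ext; funext n; rfl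

/-- A persistence module (functor `ℕ → vec`) is of finite type if its structure maps
are eventually isomorphisms. -/
def FiniteType (M : ℕ ⥤ FGModuleCat k) : Prop :=
  ∃ m : ℕ, ∀ i j : ℕ, ∀ h : i ≤ j, m ≤ i → IsIso (M.map h.hom)

/-! Both categories consist of sequences of finite-dimensional spaces `V₀ → V₁ → V₂ → ⋯`,
a functor on `ℕ` being determined by its maps between consecutive indices. Under this
dictionary finite type and finite generation agree. Beyond the top degree of a finite
generating set the maps are surjective; between finite-dimensional spaces this makes the
dimensions decrease, hence stabilize, and the maps are eventually bijective. Conversely, if the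
maps are surjective from degree `N` on, spanning sets of the pieces of degree `≤ N` generate.

The graded pieces live in `Type`, so persistence modules in an arbitrary universe are first
transported to `Type` along the equivalence `FGModuleCat.ulift`. -/

open Filter

universe u v

abbrev FiniteTypePersistenceModule (k : Type) [Field k] :=
  ObjectProperty.FullSubcategory fun M : ℕ ⥤ FGModuleCat.{u} k => FiniteType M

abbrev FGGrMod (k : Type) [Field k] :=
  ObjectProperty.FullSubcategory fun M : GrMod k => M.FG

theorem LinearMap.eventually_bijective_of_eventually_surjective {V : ℕ → Type*}
    [∀ n, AddCommGroup (V n)] [∀ n, Module k (V n)] [∀ n, Module.Finite k (V n)]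
    (f : ∀ n, V n →ₗ[k] V (n + 1)) (hf : ∀ᶠ n in atTop, Function.Surjective (f n)) :
    ∀ᶠ n in atTop, Function.Bijective (f n) := by
  obtain ⟨N, hN⟩ := eventually_atTop.1 hf
  have hanti : Antitone fun j => Module.finrank k (V (N + j)) :=
    antitone_nat_of_succ_le fun j =>
      LinearMap.finrank_le_finrank_of_surjective (hN (N + j) (Nat.le_add_right N j))
  obtain ⟨j₀, hj₀⟩ := WellFoundedLT.antitone_chain_condition hanti
  refine eventually_atTop.2 ⟨N + j₀, fun n hn => ?_⟩
  obtain ⟨j, rfl⟩ := Nat.exists_eq_add_of_le (le_trans (Nat.le_add_right N j₀) hn)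
  have hsurj := hN (N + j) (Nat.le_add_right N j)
  have hrank : Module.finrank k (V (N + j)) = Module.finrank k (V (N + j + 1)) :=
    (hj₀ j (by omega)).symm.trans (hj₀ (j + 1) (by omega))
  exact ⟨(LinearMap.injective_iff_surjective_of_finrank_eq_finrank hrank).2 hsurj, hsurj⟩

namespace GrMod

section

variable (M : GrMod k)

theorem actIter_eq_actIterAux (a j : ℕ) (h : a ≤ a + j) :
    M.actIter a (a + j) h = M.actIterAux a j := by
  unfold GrMod.actIter
  generalize Nat.add_sub_cancel' h = e
  revert e
  rw [Nat.add_sub_cancel_left]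
  intro e
  rfl

theorem actIter_self (a : ℕ) (h : a ≤ a) : M.actIter a a h = LinearMap.id :=
  M.actIter_eq_actIterAux a 0 h

theorem actIter_succ {a b : ℕ} (h : a ≤ b) (h' : a ≤ b + 1) :
    M.actIter a (b + 1) h' = M.act b ∘ₗ M.actIter a b h := by
  obtain ⟨j, rfl⟩ := Nat.exists_eq_add_of_le h
  rw [M.actIter_eq_actIterAux a j h]
  exact M.actIter_eq_actIterAux a (j + 1) h'

theorem actIter_one (a : ℕ) (h : a ≤ a + 1) : M.actIter a (a + 1) h = M.act a := by
  rw [M.actIter_succ le_rfl h, M.actIter_self, LinearMap.comp_id]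

theorem actIter_trans {a b c : ℕ} (hab : a ≤ b) (hbc : b ≤ c) :
    M.actIter b c hbc ∘ₗ M.actIter a b hab = M.actIter a c (hab.trans hbc) := by
  induction c, hbc using Nat.le_induction with
  | base => rw [M.actIter_self, LinearMap.id_comp]
  | succ c hbc ih =>
    rw [M.actIter_succ hbc, LinearMap.comp_assoc, ih, M.actIter_succ (hab.trans hbc)]

theorem actIter_surjective {a b : ℕ} (hab : a ≤ b)
    (h : ∀ n, a ≤ n → n < b → Function.Surjective (M.act n)) :
    Function.Surjective (M.actIter a b hab) := by
  induction b, hab using Nat.le_induction with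
  | base => rw [M.actIter_self]; exact Function.surjective_id
  | succ b hab ih =>
    rw [M.actIter_succ hab, LinearMap.coe_comp]
    exact (h b hab b.lt_succ_self).comp (ih fun n han hnb => h n han (hnb.trans b.lt_succ_self))

theorem actIter_bijective {a b : ℕ} (hab : a ≤ b)
    (h : ∀ n, a ≤ n → n < b → Function.Bijective (M.act n)) :
    Function.Bijective (M.actIter a b hab) := by
  induction b, hab using Nat.le_induction with
  | base => rw [M.actIter_self]; exact Function.bijective_id
  | succ b hab ih =>
    rw [M.actIter_succ hab, LinearMap.coe_comp]
    exact (h b hab b.lt_succ_self).comp (ih fun n han hnb => h n han (hnb.trans b.lt_succ_self))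

variable {M} {N : GrMod k}

@[ext]
theorem hom_ext {φ ψ : M ⟶ N} (h : ∀ n, φ.1 n = ψ.1 n) : φ = ψ :=
  Subtype.ext (funext h)

theorem hom_comp_actIter (φ : M ⟶ N) {a b : ℕ} (h : a ≤ b) :
    φ.1 b ∘ₗ M.actIter a b h = N.actIter a b h ∘ₗ φ.1 a := by
  induction b, h using Nat.le_induction with
  | base => rw [M.actIter_self, N.actIter_self, LinearMap.id_comp, LinearMap.comp_id]
  | succ b hab ih =>
    rw [M.actIter_succ hab, N.actIter_succ hab, ← LinearMap.comp_assoc, ← φ.2 b,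
      LinearMap.comp_assoc, ih, LinearMap.comp_assoc]

def isoMk (e : ∀ n, M.piece n ≃ₗ[k] N.piece n)
    (h : ∀ n, N.act n ∘ₗ (e n).toLinearMap = (e (n + 1)).toLinearMap ∘ₗ M.act n) :
    M ≅ N where
  hom := ⟨fun n => e n, h⟩
  inv := ⟨fun n => (e n).symm, fun n => LinearMap.ext fun x => (e (n + 1)).injective <| by
    simpa using (LinearMap.congr_fun (h n) ((e n).symm x)).symm⟩
  hom_inv_id := by ext n x; exact (e n).symm_apply_apply x
  inv_hom_id := by ext n x; exact (e n).apply_symm_apply x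

theorem FG.finite (hM : M.FG) (n : ℕ) : Module.Finite k (M.piece n) := by
  classical
  obtain ⟨s, hs⟩ := hM
  let shift : (Σ m, M.piece m) → M.piece n := fun g =>
    if h : g.1 ≤ n then M.actIter g.1 n h g.2 else 0
  refine ⟨⟨s.image shift, top_unique fun x _ => ?_⟩⟩
  refine Submodule.span_mono ?_ (hs n x)
  rintro _ ⟨g, hg, h, rfl⟩
  exact Finset.mem_coe.2 (Finset.mem_image.2 ⟨g, hg, dif_pos h⟩)

theorem FG.eventually_act_surjective (hM : M.FG) :
    ∀ᶠ n in atTop, Function.Surjective (M.act n) := by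
  obtain ⟨s, hs⟩ := hM
  -- Past the top degree of the generators, every generator of degree `n + 1` is a `t`-multiple.
  refine eventually_atTop.2 ⟨s.sup Sigma.fst, fun n hn x => ?_⟩
  suffices x ∈ LinearMap.range (M.act n) from this
  refine Submodule.span_le.2 ?_ (hs (n + 1) x)
  rintro _ ⟨g, hg, h, rfl⟩
  have hgn : g.1 ≤ n := (Finset.le_sup hg).trans hn
  exact ⟨M.actIter g.1 n hgn g.2, by rw [M.actIter_succ hgn h]; rfl⟩

theorem FG.eventually_act_bijective (hM : M.FG) :
    ∀ᶠ n in atTop, Function.Bijective (M.act n) :=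
  have := hM.finite
  LinearMap.eventually_bijective_of_eventually_surjective M.act hM.eventually_act_surjective

theorem fg_of_eventually_act_surjective [∀ n, Module.Finite k (M.piece n)]
    (h : ∀ᶠ n in atTop, Function.Surjective (M.act n)) : M.FG := by
  classical
  obtain ⟨N, hN⟩ := eventually_atTop.1 h
  choose S hS using fun n => (Module.Finite.fg_top : (⊤ : Submodule k (M.piece n)).FG)
  -- Generators: spanning sets of the pieces of degree `≤ N`; the piece of degree `m` is the
  -- image of the piece of degree `min m N`.
  refine ⟨(Finset.range (N + 1)).biUnion fun n => (S n).image (Sigma.mk n), fun m x => ?_⟩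
  have hle : min m N ≤ m := min_le_left m N
  obtain ⟨y, rfl⟩ := M.actIter_surjective hle (fun n hn hnm => hN n (by omega)) x
  have hy : y ∈ Submodule.span k (S (min m N) : Set (M.piece (min m N))) := by
    rw [hS]; trivial
  have hx := Submodule.mem_map_of_mem (f := M.actIter (min m N) m hle) hy
  rw [Submodule.map_span] at hx
  refine Submodule.span_mono ?_ hx
  rintro _ ⟨v, hv, rfl⟩
  exact ⟨⟨min m N, v⟩, Finset.mem_biUnion.2 ⟨min m N, Finset.mem_range.2 (by omega),
    Finset.mem_image_of_mem _ hv⟩, hle, rfl⟩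

end

noncomputable def ofPersistence (M : ℕ ⥤ FGModuleCat k) : GrMod k where
  piece n := M.obj n
  act n := (M.map (homOfLE n.le_succ)).hom.hom

instance (M : ℕ ⥤ FGModuleCat k) (n : ℕ) : Module.Finite k ((ofPersistence M).piece n) :=
  inferInstanceAs (Module.Finite k (M.obj n))

theorem ofPersistence_actIter (M : ℕ ⥤ FGModuleCat k) {a b : ℕ} (h : a ≤ b) :
    (ofPersistence M).actIter a b h = (M.map (homOfLE h)).hom.hom := by
  induction b, h using Nat.le_induction with
  | base => rw [actIter_self]; exact congrArg (·.hom.hom) (M.map_id a).symm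
  | succ b hab ih =>
    rw [actIter_succ _ hab, ih]
    exact congrArg (·.hom.hom) (M.map_comp (homOfLE hab) (homOfLE b.le_succ)).symm

theorem ofPersistence_fg {M : ℕ ⥤ FGModuleCat k} (hM : FiniteType M) :
    (ofPersistence M).FG := by
  obtain ⟨m, hm⟩ := hM
  refine fg_of_eventually_act_surjective (eventually_atTop.2 ⟨m, fun n hn => ?_⟩)
  have := hm n (n + 1) n.le_succ hn
  exact (ConcreteCategory.bijective_of_isIso (M.map (homOfLE n.le_succ))).2

noncomputable def toPersistence (M : GrMod k) [∀ n, Module.Finite k (M.piece n)] :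
    ℕ ⥤ FGModuleCat k where
  obj n := FGModuleCat.of k (M.piece n)
  map f := FGModuleCat.ofHom (M.actIter _ _ (leOfHom f))
  map_id n := FGModuleCat.hom_ext (M.actIter_self n le_rfl)
  map_comp f g := FGModuleCat.hom_ext (M.actIter_trans (leOfHom f) (leOfHom g)).symm

theorem toPersistence_finiteType {M : GrMod k} [∀ n, Module.Finite k (M.piece n)] (hM : M.FG) :
    FiniteType (toPersistence M) := by
  obtain ⟨N, hN⟩ := eventually_atTop.1 hM.eventually_act_bijective
  refine ⟨N, fun i j h hi => ?_⟩
  have hbij := M.actIter_bijective (leOfHom h.hom) fun n hn _ => hN n (hi.trans hn)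
  exact (LinearEquiv.ofBijective _ hbij).toFGModuleCatIso.isIso_hom

noncomputable def toPersistenceOfPersistenceIso (M : ℕ ⥤ FGModuleCat k) :
    toPersistence (ofPersistence M) ≅ M :=
  NatIso.ofComponents (fun _ => Iso.refl _) fun f =>
    FGModuleCat.hom_ext (ofPersistence_actIter M (leOfHom f))

noncomputable def ofPersistenceToPersistenceIso (M : GrMod k) [∀ n, Module.Finite k (M.piece n)] :
    ofPersistence (toPersistence M) ≅ M :=
  isoMk (fun n => LinearEquiv.refl k (M.piece n)) fun n =>
    (M.actIter_one n n.le_succ).symm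

noncomputable def ofPersistenceFunctor : FiniteTypePersistenceModule.{0} k ⥤ FGGrMod k where
  obj X := ⟨ofPersistence X.obj, ofPersistence_fg X.property⟩
  map η := ObjectProperty.homMk ⟨fun n => (η.hom.app n).hom.hom, fun n =>
    congrArg (·.hom.hom) (η.hom.naturality (homOfLE n.le_succ)).symm⟩

noncomputable def toPersistenceFunctor : FGGrMod k ⥤ FiniteTypePersistenceModule.{0} k where
  obj X :=
    have := X.property.finite
    ⟨toPersistence X.obj, toPersistence_finiteType X.property⟩
  map φ := ObjectProperty.homMk
    { app n := ObjectProperty.homMk (ModuleCat.ofHom (φ.hom.1 n))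
      naturality _ _ f := FGModuleCat.hom_ext (hom_comp_actIter φ.hom (leOfHom f)) }

noncomputable def persistenceEquivFG : FiniteTypePersistenceModule.{0} k ≌ FGGrMod k :=
  CategoryTheory.Equivalence.mk ofPersistenceFunctor toPersistenceFunctor
    (NatIso.ofComponents
      (fun X => ObjectProperty.isoMk _ (toPersistenceOfPersistenceIso X.obj).symm)
      fun _ => by ext; rfl)
    (NatIso.ofComponents (fun X =>
      have := X.property.finite
      ObjectProperty.isoMk _ (ofPersistenceToPersistenceIso X.obj)) fun _ => by ext; rfl)

end GrMod

theorem FiniteType.comp_iff {M : ℕ ⥤ FGModuleCat.{u} k}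
    (G : FGModuleCat.{u} k ⥤ FGModuleCat.{v} k) [G.IsEquivalence] :
    FiniteType (M ⋙ G) ↔ FiniteType M :=
  exists_congr fun _ => forall₄_congr fun _ _ h _ => isIso_iff_of_reflects_iso (M.map h.hom) G

instance :
    ObjectProperty.IsClosedUnderIsomorphisms fun M : ℕ ⥤ FGModuleCat.{u} k => FiniteType M where
  of_iso {M N} e := by
    rintro ⟨m, hm⟩
    refine ⟨m, fun i j h hi => ?_⟩
    have := hm i j h hi
    rw [← NatIso.naturality_1 e h.hom]
    infer_instance

noncomputable def FiniteTypePersistenceModule.equivULift :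
    FiniteTypePersistenceModule.{u} k ≌ FiniteTypePersistenceModule.{0} k :=
  (Equivalence.congrRight (FGModuleCat.ulift.{0} k).asEquivalence.symm).congrFullSubcategory
    (funext fun _ => propext (FiniteType.comp_iff _))

/-- The category of persistence modules of finite type is equivalent
to the category of finitely generated `ℕ`-graded `k[t]`-modules. -/
theorem persistence_equiv_graded (k : Type) [Field k] :
    Nonempty ((ObjectProperty.FullSubcategory (fun M : ℕ ⥤ FGModuleCat k => FiniteType M)) ≌
      ObjectProperty.FullSubcategory (fun M : GrMod k => M.FG)) :=
  ⟨FiniteTypePersistenceModule.equivULift.trans GrMod.persistenceEquivFG⟩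
end

section
/- Given presentations of graded modules L, M, N with exact rows, maps f_0,f_1,g_0,g_1 presenting morphisms φ: L → M and ψ: M → N satisfying g_0∘f_0 = 0 and g_1∘f_1 = 0, and with the presentation of N reduced (r injective), the map κ : ker(g_0 − r) → ker ψ, κ(x,y) := μ(x), is a well-defined epimorphism whose kernel equals the image of the map (q, g_1) : Q_1 → ker(g_0 − r). In other words, 0 ← ker ψ ← ker(g_0 − r) ← Q_1 is a presentation of ker ψ. -/
/-- Given a complex of presentations of graded `k[t]`-modules
`L →φ M →ψ N` (presentations `0 ← L ←λ P₀ ←p P₁`, `0 ← M ←μ Q₀ ←q Q₁`,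
`0 ← N ←ν R₀ ←r R₁` with exact rows, free finitely generated `P`'s, `Q`'s, `R`'s,
commuting vertical maps `f₀, f₁, g₀, g₁` with `g₀∘f₀ = 0`, `g₁∘f₁ = 0`, and `r`
injective), the map `κ : ker(g₀ − r) → ker ψ`, `κ(x,y) = μ(x)`, is a well-defined
epimorphism whose kernel is the image of `(q, g₁) : Q₁ → ker(g₀ − r)`.  That is,
`0 ← ker ψ ← ker(g₀ − r) ← Q₁` is a presentation of `ker ψ`. -/
theorem presentation_of_kernel (k : Type) [Field k]
    {L M N P₀ P₁ Q₀ Q₁ R₀ R₁ : Type}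
    [AddCommGroup L] [Module (Polynomial k) L]
    [AddCommGroup M] [Module (Polynomial k) M]
    [AddCommGroup N] [Module (Polynomial k) N]
    [AddCommGroup P₀] [Module (Polynomial k) P₀]
    [AddCommGroup P₁] [Module (Polynomial k) P₁]
    [AddCommGroup Q₀] [Module (Polynomial k) Q₀]
    [AddCommGroup Q₁] [Module (Polynomial k) Q₁]
    [AddCommGroup R₀] [Module (Polynomial k) R₀]
    [AddCommGroup R₁] [Module (Polynomial k) R₁]
    -- the `P`'s, `Q`'s and `R`'s are free and finitely generated
    [Module.Free (Polynomial k) P₀] [Module.Finite (Polynomial k) P₀]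
    [Module.Free (Polynomial k) P₁] [Module.Finite (Polynomial k) P₁]
    [Module.Free (Polynomial k) Q₀] [Module.Finite (Polynomial k) Q₀]
    [Module.Free (Polynomial k) Q₁] [Module.Finite (Polynomial k) Q₁]
    [Module.Free (Polynomial k) R₀] [Module.Finite (Polynomial k) R₀]
    [Module.Free (Polynomial k) R₁] [Module.Finite (Polynomial k) R₁]
    (φ : L →ₗ[Polynomial k] M) (ψ : M →ₗ[Polynomial k] N)
    (lam : P₀ →ₗ[Polynomial k] L) (p : P₁ →ₗ[Polynomial k] P₀)
    (μ : Q₀ →ₗ[Polynomial k] M) (q : Q₁ →ₗ[Polynomial k] Q₀)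
    (ν : R₀ →ₗ[Polynomial k] N) (r : R₁ →ₗ[Polynomial k] R₀)
    (f₀ : P₀ →ₗ[Polynomial k] Q₀) (f₁ : P₁ →ₗ[Polynomial k] Q₁)
    (g₀ : Q₀ →ₗ[Polynomial k] R₀) (g₁ : Q₁ →ₗ[Polynomial k] R₁)
    -- the complex condition
    (hcx : ψ ∘ₗ φ = 0)
    -- exactness of the rows
    (hlam : Function.Surjective lam) (hexL : LinearMap.ker lam = LinearMap.range p)
    (hμ : Function.Surjective μ) (hexM : LinearMap.ker μ = LinearMap.range q)
    (hν : Function.Surjective ν) (hexN : LinearMap.ker ν = LinearMap.range r)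
    -- the presentation of `N` is reduced
    (hr : Function.Injective r)
    -- commutativity of the squares
    (hsq₁ : φ ∘ₗ lam = μ ∘ₗ f₀) (hsq₂ : f₀ ∘ₗ p = q ∘ₗ f₁)
    (hsq₃ : ψ ∘ₗ μ = ν ∘ₗ g₀) (hsq₄ : g₀ ∘ₗ q = r ∘ₗ g₁)
    -- the vertical maps form a complex of presentations
    (hgf₀ : g₀ ∘ₗ f₀ = 0) (hgf₁ : g₁ ∘ₗ f₁ = 0) :
    -- `κ` is well defined: it lands in `ker ψ`
    (∀ x : Q₀, ∀ y : R₁, g₀ x = r y → ψ (μ x) = 0) ∧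
    -- `κ` is an epimorphism onto `ker ψ`
    (∀ m : M, ψ m = 0 → ∃ x : Q₀, ∃ y : R₁, g₀ x = r y ∧ μ x = m) ∧
    -- the kernel of `κ` is exactly the image of `(q, g₁)`
    (∀ x : Q₀, ∀ y : R₁, g₀ x = r y →
      (μ x = 0 ↔ ∃ a : Q₁, q a = x ∧ g₁ a = y)) := by
  refine ⟨?_, ?_, ?_⟩
  · intro x y h
    have h1 : ψ (μ x) = ν (g₀ x) := LinearMap.congr_fun hsq₃ x
    rw [h1, h]
    have : r y ∈ LinearMap.ker ν := by rw [hexN]; exact ⟨y, rfl⟩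
    exact this
  · intro m hm
    obtain ⟨x, hx⟩ := hμ m
    have h1 : ν (g₀ x) = 0 := by
      have := LinearMap.congr_fun hsq₃ x
      simp only [LinearMap.comp_apply] at this
      rw [← this, hx, hm]
    have : g₀ x ∈ LinearMap.range r := by rw [← hexN]; exact h1
    obtain ⟨y, hy⟩ := this
    exact ⟨x, y, hy.symm, hx⟩
  · intro x y h
    constructor
    · intro hx
      have : x ∈ LinearMap.range q := by rw [← hexM]; exact hx
      obtain ⟨a, ha⟩ := this
      refine ⟨a, ha, hr ?_⟩
      have := LinearMap.congr_fun hsq₄ a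
      simp only [LinearMap.comp_apply] at this
      rw [← this, ha, h]
    · rintro ⟨a, rfl, rfl⟩
      have : q a ∈ LinearMap.ker μ := by rw [hexM]; exact ⟨a, rfl⟩
      exact this
end

section
/- With the same setup of a complex of presentations of L →^φ M →^ψ N, the sequence 0 ← ker ψ / im φ ← ker(g_0 − r) ← P_0 × Q_1 is exact, where the first map is π∘κ (π the quotient projection, κ(x,y) = μ(x)) and the second map sends (x,y) to (f_0(x), 0) − (q(y), g_1(y)). That is, π∘κ is an epimorphism with kernel equal to the image of this map, so this is a presentation of the homology ker ψ / im φ. -/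
/-- With the same setup of a complex of presentations of
`L →φ M →ψ N`, the sequence `0 ← ker ψ / im φ ←π∘κ ker(g₀ − r) ← P₀ × Q₁` is exact,
where the second map sends `(x, y)` to `(f₀ x, 0) − (q y, g₁ y)`.  That is, `π∘κ` is an
epimorphism (every element of `ker ψ` agrees modulo `im φ` with some `κ(z)`,
`z ∈ ker(g₀ − r)`) and its kernel equals the image of this map; hence this is a
presentation of the homology `ker ψ / im φ`. -/
theorem presentation_of_homology (k : Type) [Field k]
    {L M N P₀ P₁ Q₀ Q₁ R₀ R₁ : Type}
    [AddCommGroup L] [Module (Polynomial k) L]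
    [AddCommGroup M] [Module (Polynomial k) M]
    [AddCommGroup N] [Module (Polynomial k) N]
    [AddCommGroup P₀] [Module (Polynomial k) P₀]
    [AddCommGroup P₁] [Module (Polynomial k) P₁]
    [AddCommGroup Q₀] [Module (Polynomial k) Q₀]
    [AddCommGroup Q₁] [Module (Polynomial k) Q₁]
    [AddCommGroup R₀] [Module (Polynomial k) R₀]
    [AddCommGroup R₁] [Module (Polynomial k) R₁]
    [Module.Free (Polynomial k) P₀] [Module.Finite (Polynomial k) P₀]
    [Module.Free (Polynomial k) P₁] [Module.Finite (Polynomial k) P₁]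
    [Module.Free (Polynomial k) Q₀] [Module.Finite (Polynomial k) Q₀]
    [Module.Free (Polynomial k) Q₁] [Module.Finite (Polynomial k) Q₁]
    [Module.Free (Polynomial k) R₀] [Module.Finite (Polynomial k) R₀]
    [Module.Free (Polynomial k) R₁] [Module.Finite (Polynomial k) R₁]
    (φ : L →ₗ[Polynomial k] M) (ψ : M →ₗ[Polynomial k] N)
    (lam : P₀ →ₗ[Polynomial k] L) (p : P₁ →ₗ[Polynomial k] P₀)
    (μ : Q₀ →ₗ[Polynomial k] M) (q : Q₁ →ₗ[Polynomial k] Q₀)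
    (ν : R₀ →ₗ[Polynomial k] N) (r : R₁ →ₗ[Polynomial k] R₀)
    (f₀ : P₀ →ₗ[Polynomial k] Q₀) (f₁ : P₁ →ₗ[Polynomial k] Q₁)
    (g₀ : Q₀ →ₗ[Polynomial k] R₀) (g₁ : Q₁ →ₗ[Polynomial k] R₁)
    (hcx : ψ ∘ₗ φ = 0)
    (hlam : Function.Surjective lam) (hexL : LinearMap.ker lam = LinearMap.range p)
    (hμ : Function.Surjective μ) (hexM : LinearMap.ker μ = LinearMap.range q)
    (hν : Function.Surjective ν) (hexN : LinearMap.ker ν = LinearMap.range r)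
    (hr : Function.Injective r)
    (hsq₁ : φ ∘ₗ lam = μ ∘ₗ f₀) (hsq₂ : f₀ ∘ₗ p = q ∘ₗ f₁)
    (hsq₃ : ψ ∘ₗ μ = ν ∘ₗ g₀) (hsq₄ : g₀ ∘ₗ q = r ∘ₗ g₁)
    (hgf₀ : g₀ ∘ₗ f₀ = 0) (hgf₁ : g₁ ∘ₗ f₁ = 0) :
    -- `π∘κ` is an epimorphism onto `ker ψ / im φ`
    (∀ m : M, ψ m = 0 → ∃ x : Q₀, ∃ y : R₁, g₀ x = r y ∧ μ x - m ∈ LinearMap.range φ) ∧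
    -- the kernel of `π∘κ` is the image of `(x, y) ↦ (f₀ x, 0) − (q y, g₁ y)`
    (∀ z : Q₀ × R₁, g₀ z.1 = r z.2 →
      (μ z.1 ∈ LinearMap.range φ ↔
        ∃ x : P₀, ∃ y : Q₁, z = ((f₀ x, (0 : R₁)) - (q y, g₁ y)))) := by
  constructor
  · intro m hm
    obtain ⟨x₀, hx₀⟩ := hμ m
    have hν0 : ν (g₀ x₀) = 0 := by
      have := LinearMap.congr_fun hsq₃ x₀
      simp only [LinearMap.comp_apply] at this
      rw [← this, hx₀, hm]
    obtain ⟨y, hy⟩ : g₀ x₀ ∈ LinearMap.range r := by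
      rw [← hexN]; exact hν0
    exact ⟨x₀, y, hy.symm, by rw [hx₀]; simp⟩
  · rintro ⟨x, y⟩ hz
    simp only at hz
    constructor
    · rintro ⟨l, hl⟩
      obtain ⟨a, ha⟩ := hlam l
      have hμfa : μ (f₀ a) = μ x := by
        have := LinearMap.congr_fun hsq₁ a
        simp only [LinearMap.comp_apply] at this
        rw [← this, ha, hl]
      obtain ⟨b, hb⟩ : f₀ a - x ∈ LinearMap.range q := by
        rw [← hexM, LinearMap.mem_ker, map_sub, hμfa, sub_self]
      have hgb : g₁ b = -y := by
        apply hr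
        have h1 := LinearMap.congr_fun hsq₄ b
        have h2 := LinearMap.congr_fun hgf₀ a
        simp only [LinearMap.comp_apply, LinearMap.zero_apply] at h1 h2
        rw [← h1, hb, map_sub, h2, zero_sub, hz, map_neg]
      refine ⟨a, b, ?_⟩
      have hx : x = f₀ a - q b := by rw [hb]; abel
      rw [Prod.mk_sub_mk, Prod.mk.injEq]
      exact ⟨hx, by rw [hgb]; abel⟩
    · rintro ⟨a, b, hab⟩
      rw [Prod.mk_sub_mk, Prod.mk.injEq] at hab
      have := LinearMap.congr_fun hsq₁ a
      simp only [LinearMap.comp_apply] at this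
      have hqb : μ (q b) = 0 := by
        have : q b ∈ LinearMap.ker μ := by rw [hexM]; exact ⟨b, rfl⟩
        exact this
      refine ⟨lam a, ?_⟩
      rw [this, hab.1, map_sub, hqb, sub_zero]
end

section
/- For every complex of finitely generated graded k[t]-modules L →^φ M →^ψ N (with ψ∘φ = 0), there exists a complex of presentations presenting it: i.e., presentations of L, M, N by free modules together with lifted maps f_0, f_1, g_0, g_1 making all squares commute and satisfying g_0∘f_0 = 0 and g_1∘f_1 = 0. -/
section Aux

variable {R : Type*} [Ring R]

/-- A finitely generated submodule is the range of a map from a finite free module. -/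
lemma aux_exists_fin_range_eq {M : Type*} [AddCommGroup M] [Module R M]
    (S : Submodule R M) (hS : S.FG) :
    ∃ (n : ℕ) (p : (Fin n → R) →ₗ[R] M), LinearMap.range p = S := by
  haveI : Module.Finite R S := Module.Finite.iff_fg.mpr hS
  obtain ⟨n, σ, hσ⟩ := Module.Finite.exists_fin' R S
  refine ⟨n, S.subtype ∘ₗ σ, ?_⟩
  rw [LinearMap.range_comp, LinearMap.range_eq_top.mpr hσ, Submodule.map_top,
    Submodule.range_subtype]

/-- Lift a map from a free module through a map whose range contains its range. -/
lemma aux_lift_of_range_le {n : ℕ} {B C : Type*} [AddCommGroup B] [Module R B]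
    [AddCommGroup C] [Module R C]
    (r : C →ₗ[R] B) (g : (Fin n → R) →ₗ[R] B)
    (h : LinearMap.range g ≤ LinearMap.range r) :
    ∃ h' : (Fin n → R) →ₗ[R] C, r ∘ₗ h' = g := by
  obtain ⟨h', hh'⟩ := Module.projective_lifting_property r.rangeRestrict
    (g.codRestrict (LinearMap.range r) (fun x => h (LinearMap.mem_range_self g x)))
    (LinearMap.surjective_rangeRestrict r)
  exact ⟨h', LinearMap.ext fun x => congrArg Subtype.val (LinearMap.congr_fun hh' x)⟩

/-- The standard equivalence splitting `Fin (a+b) → R` as a product. -/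
noncomputable def auxProdEquiv (R : Type*) [Semiring R] (a b : ℕ) :
    (Fin (a + b) → R) ≃ₗ[R] (Fin a → R) × (Fin b → R) :=
  (LinearEquiv.funCongrLeft R R finSumFinEquiv).trans
    (LinearEquiv.sumArrowLequivProdArrow _ _ R R)

lemma aux_coprod_comp_inl {a b : ℕ} {C : Type*} [AddCommGroup C] [Module R C]
    (e : (Fin (a + b) → R) ≃ₗ[R] (Fin a → R) × (Fin b → R))
    (u : (Fin a → R) →ₗ[R] C) (v : (Fin b → R) →ₗ[R] C) :
    ((u.coprod v) ∘ₗ (e : (Fin (a+b) → R) →ₗ[R] _)) ∘ₗ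
      ((e.symm : _ →ₗ[R] (Fin (a+b) → R)) ∘ₗ LinearMap.inl R (Fin a → R) (Fin b → R)) = u := by
  ext x
  simp

lemma aux_range_coprod_comp {a b : ℕ} {C : Type*} [AddCommGroup C] [Module R C]
    (e : (Fin (a + b) → R) ≃ₗ[R] (Fin a → R) × (Fin b → R))
    (u : (Fin a → R) →ₗ[R] C) (v : (Fin b → R) →ₗ[R] C) :
    LinearMap.range ((u.coprod v) ∘ₗ (e : (Fin (a+b) → R) →ₗ[R] _)) =
      LinearMap.range u ⊔ LinearMap.range v := by
  rw [LinearMap.range_comp, LinearEquiv.range, Submodule.map_top, LinearMap.range_coprod]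

lemma aux_surjective_coprod_comp {a b : ℕ} {C : Type*} [AddCommGroup C] [Module R C]
    (e : (Fin (a + b) → R) ≃ₗ[R] (Fin a → R) × (Fin b → R))
    (u : (Fin a → R) →ₗ[R] C) (v : (Fin b → R) →ₗ[R] C)
    (hv : Function.Surjective v) :
    Function.Surjective ((u.coprod v) ∘ₗ (e : (Fin (a+b) → R) →ₗ[R] _)) := by
  intro x
  obtain ⟨y, hy⟩ := hv x
  exact ⟨e.symm (0, y), by simp [hy]⟩

lemma aux_comp_coprod_comp {a b : ℕ} {C D : Type*} [AddCommGroup C] [Module R C]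
    [AddCommGroup D] [Module R D]
    (e : (Fin (a + b) → R) ≃ₗ[R] (Fin a → R) × (Fin b → R))
    (u : (Fin a → R) →ₗ[R] C) (v : (Fin b → R) →ₗ[R] C) (f : C →ₗ[R] D) :
    f ∘ₗ ((u.coprod v) ∘ₗ (e : (Fin (a+b) → R) →ₗ[R] _)) =
      ((f ∘ₗ u).coprod (f ∘ₗ v)) ∘ₗ (e : (Fin (a+b) → R) →ₗ[R] _) := by
  rw [← LinearMap.comp_assoc, LinearMap.comp_coprod]

end Aux

/-- For every complex `L →φ M →ψ N` of finitely generated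
(graded) `k[t]`-modules with `ψ∘φ = 0`, there exists a complex of presentations
presenting it: presentations of `L`, `M`, `N` by free finitely generated modules
(modelled as `Fin n → k[t]`) together with lifted maps `f₀, f₁, g₀, g₁` making all
squares commute and satisfying `g₀∘f₀ = 0` and `g₁∘f₁ = 0`. -/
theorem exists_complex_of_presentations (k : Type) [Field k]
    {L M N : Type}
    [AddCommGroup L] [Module (Polynomial k) L] [Module.Finite (Polynomial k) L]
    [AddCommGroup M] [Module (Polynomial k) M] [Module.Finite (Polynomial k) M]
    [AddCommGroup N] [Module (Polynomial k) N] [Module.Finite (Polynomial k) N]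
    (φ : L →ₗ[Polynomial k] M) (ψ : M →ₗ[Polynomial k] N)
    (hcx : ψ ∘ₗ φ = 0) :
    ∃ (a₀ a₁ b₀ b₁ c₀ c₁ : ℕ)
      (lam : (Fin a₀ → Polynomial k) →ₗ[Polynomial k] L)
      (p : (Fin a₁ → Polynomial k) →ₗ[Polynomial k] (Fin a₀ → Polynomial k))
      (μ : (Fin b₀ → Polynomial k) →ₗ[Polynomial k] M)
      (q : (Fin b₁ → Polynomial k) →ₗ[Polynomial k] (Fin b₀ → Polynomial k))
      (ν : (Fin c₀ → Polynomial k) →ₗ[Polynomial k] N)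
      (r : (Fin c₁ → Polynomial k) →ₗ[Polynomial k] (Fin c₀ → Polynomial k))
      (f₀ : (Fin a₀ → Polynomial k) →ₗ[Polynomial k] (Fin b₀ → Polynomial k))
      (f₁ : (Fin a₁ → Polynomial k) →ₗ[Polynomial k] (Fin b₁ → Polynomial k))
      (g₀ : (Fin b₀ → Polynomial k) →ₗ[Polynomial k] (Fin c₀ → Polynomial k))
      (g₁ : (Fin b₁ → Polynomial k) →ₗ[Polynomial k] (Fin c₁ → Polynomial k)),
      -- the rows are presentations (exact sequences)
      Function.Surjective lam ∧ LinearMap.ker lam = LinearMap.range p ∧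
      Function.Surjective μ ∧ LinearMap.ker μ = LinearMap.range q ∧
      Function.Surjective ν ∧ LinearMap.ker ν = LinearMap.range r ∧
      -- all squares commute
      φ ∘ₗ lam = μ ∘ₗ f₀ ∧ f₀ ∘ₗ p = q ∘ₗ f₁ ∧
      ψ ∘ₗ μ = ν ∘ₗ g₀ ∧ g₀ ∘ₗ q = r ∘ₗ g₁ ∧
      -- the lifted maps form a complex
      g₀ ∘ₗ f₀ = 0 ∧ g₁ ∘ₗ f₁ = 0 := by
  classical
  set R := Polynomial k
  -- surjections from finite free modules onto L, M, N
  obtain ⟨a₀, lam, hlam⟩ := Module.Finite.exists_fin' R L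
  obtain ⟨m, π, hπ⟩ := Module.Finite.exists_fin' R M
  obtain ⟨c₀, ν, hν⟩ := Module.Finite.exists_fin' R N
  -- presentation of M built on top of that of L
  set e := auxProdEquiv R a₀ m
  set μ : (Fin (a₀ + m) → R) →ₗ[R] M := ((φ ∘ₗ lam).coprod π) ∘ₗ (e : _ →ₗ[R] _) with hμ
  set f₀ : (Fin a₀ → R) →ₗ[R] (Fin (a₀ + m) → R) :=
    (e.symm : _ →ₗ[R] _) ∘ₗ LinearMap.inl R (Fin a₀ → R) (Fin m → R) with hf₀
  have hμsurj : Function.Surjective μ := aux_surjective_coprod_comp e _ π hπ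
  have hsq0 : φ ∘ₗ lam = μ ∘ₗ f₀ := (aux_coprod_comp_inl e (φ ∘ₗ lam) π).symm
  -- g₀ : zero on the `L`-part, lift of ψ∘π on the second part
  obtain ⟨h, hh⟩ := Module.projective_lifting_property ν (ψ ∘ₗ π) hν
  set g₀ : (Fin (a₀ + m) → R) →ₗ[R] (Fin c₀ → R) :=
    ((0 : (Fin a₀ → R) →ₗ[R] _).coprod h) ∘ₗ (e : _ →ₗ[R] _) with hg₀
  have hsq1 : ψ ∘ₗ μ = ν ∘ₗ g₀ := by
    rw [hμ, hg₀, aux_comp_coprod_comp, aux_comp_coprod_comp]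
    congr 1
    congr 1
    · rw [← LinearMap.comp_assoc, hcx, LinearMap.zero_comp, LinearMap.comp_zero]
    · exact hh.symm
  have hgf0 : g₀ ∘ₗ f₀ = 0 := aux_coprod_comp_inl e 0 h
  -- second stage: generators of kernels
  obtain ⟨a₁, p, hp⟩ := aux_exists_fin_range_eq (LinearMap.ker lam)
    (IsNoetherian.noetherian _)
  obtain ⟨m₁, τ, hτ⟩ := aux_exists_fin_range_eq (LinearMap.ker μ)
    (IsNoetherian.noetherian _)
  obtain ⟨c₁, r, hr⟩ := aux_exists_fin_range_eq (LinearMap.ker ν)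
    (IsNoetherian.noetherian _)
  have hlamp : lam ∘ₗ p = 0 := by
    rw [← LinearMap.range_le_ker_iff, hp]
  have hμτ : μ ∘ₗ τ = 0 := by
    rw [← LinearMap.range_le_ker_iff, hτ]
  -- q built on top of p
  set e₁ := auxProdEquiv R a₁ m₁
  set q : (Fin (a₁ + m₁) → R) →ₗ[R] (Fin (a₀ + m) → R) :=
    ((f₀ ∘ₗ p).coprod τ) ∘ₗ (e₁ : _ →ₗ[R] _) with hq
  set f₁ : (Fin a₁ → R) →ₗ[R] (Fin (a₁ + m₁) → R) :=
    (e₁.symm : _ →ₗ[R] _) ∘ₗ LinearMap.inl R (Fin a₁ → R) (Fin m₁ → R) with hf₁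
  have hrangeq : LinearMap.range q = LinearMap.ker μ := by
    rw [hq, aux_range_coprod_comp, hτ, sup_eq_right.mpr]
    rw [LinearMap.range_le_ker_iff, ← LinearMap.comp_assoc, ← hsq0,
      LinearMap.comp_assoc, hlamp, LinearMap.comp_zero]
  have hsq2 : f₀ ∘ₗ p = q ∘ₗ f₁ := (aux_coprod_comp_inl e₁ (f₀ ∘ₗ p) τ).symm
  -- g₁ : zero on the first part, lift of g₀∘τ through r on the second
  have hrange_le : LinearMap.range (g₀ ∘ₗ τ) ≤ LinearMap.range r := by
    rw [hr, LinearMap.range_le_ker_iff, ← LinearMap.comp_assoc, ← hsq1,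
      LinearMap.comp_assoc, hμτ, LinearMap.comp_zero]
  obtain ⟨h', hh'⟩ := aux_lift_of_range_le r (g₀ ∘ₗ τ) hrange_le
  set g₁ : (Fin (a₁ + m₁) → R) →ₗ[R] (Fin c₁ → R) :=
    ((0 : (Fin a₁ → R) →ₗ[R] _).coprod h') ∘ₗ (e₁ : _ →ₗ[R] _) with hg₁
  have hsq3 : g₀ ∘ₗ q = r ∘ₗ g₁ := by
    rw [hq, hg₁, aux_comp_coprod_comp, aux_comp_coprod_comp]
    congr 1
    congr 1
    · rw [← LinearMap.comp_assoc, hgf0, LinearMap.zero_comp, LinearMap.comp_zero]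
    · exact hh'.symm
  have hgf1 : g₁ ∘ₗ f₁ = 0 := aux_coprod_comp_inl e₁ 0 h'
  refine ⟨a₀, a₁, a₀ + m, a₁ + m₁, c₀, c₁, lam, p, μ, q, ν, r, f₀, f₁, g₀, g₁,
    hlam, hp.symm, hμsurj, hrangeq.symm, hν, hr.symm, hsq0, hsq2, hsq1, hsq3, hgf0, hgf1⟩
end

section
/- Let X be a finite poset, K(X) its order complex (the simplicial complex of nonempty totally ordered subsets of X), and f : K(X) → X the surjection sending a chain x_0 < ... < x_k to its maximum x_k, which is an order-preserving map of posets (faces of chains map to smaller-or-equal elements). Then the pullback functor f* : Shv(X, C) → Shv(K(X), C), defined by (f*F)(x_•) := F(max x_•) on objects and by F(max x_• ≤ max y_•) on face relations, is fully faithful. -/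
open CategoryTheory

/-- The order complex of a poset `X`: nonempty finite totally ordered subsets
(chains) of `X`, viewed as a poset under the face (inclusion) relation. -/
def OrderCx (X : Type) [PartialOrder X] : Type :=
  {s : Finset X // s.Nonempty ∧ IsChain (· ≤ ·) (s : Set X)}

instance (X : Type) [PartialOrder X] : PartialOrder (OrderCx X) :=
  inferInstanceAs (PartialOrder {s : Finset X // s.Nonempty ∧ IsChain (· ≤ ·) (s : Set X)})

/-- A nonempty finite chain has a maximum. -/
lemma OrderCx.exists_max (X : Type) [PartialOrder X] (s : OrderCx X) :
    ∃ m ∈ s.1, ∀ x ∈ s.1, x ≤ m := by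
  obtain ⟨m, hm, hmax⟩ := s.1.exists_maximal s.2.1
  refine ⟨m, hm, fun x hx => ?_⟩
  rcases eq_or_ne x m with rfl | hne
  · exact le_rfl
  · rcases s.2.2 hx hm hne with h | h
    · exact h
    · first
      | exact hmax hx h
      | exact absurd (h.lt_of_ne hne.symm) (hmax x hx)

/-- The projection `f : K(X) → X` sending a chain `x_0 < ... < x_k` to its maximum. -/
noncomputable def chainMax (X : Type) [PartialOrder X] (s : OrderCx X) : X :=
  (OrderCx.exists_max X s).choose

lemma chainMax_mem (X : Type) [PartialOrder X] (s : OrderCx X) : chainMax X s ∈ s.1 :=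
  (OrderCx.exists_max X s).choose_spec.1

lemma le_chainMax (X : Type) [PartialOrder X] (s : OrderCx X) :
    ∀ x ∈ s.1, x ≤ chainMax X s :=
  (OrderCx.exists_max X s).choose_spec.2

/-- The projection is order preserving (faces map to smaller-or-equal elements). -/
lemma chainMax_monotone (X : Type) [PartialOrder X] : Monotone (chainMax X) := by
  intro s t h
  exact le_chainMax X t _ (Finset.le_iff_subset.mp h (chainMax_mem X s))

/-- The pullback functor `f* : Shv(X, C) → Shv(K(X), C)` along the projection
`f : K(X) → X`, given by `(f*F)(x_•) = F(max x_•)` (precomposition with `f`). -/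
noncomputable def pullbackOrderCx (X : Type) [PartialOrder X]
    (C : Type*) [Category C] : (X ⥤ C) ⥤ (OrderCx X ⥤ C) :=
  (Functor.whiskeringLeft (OrderCx X) X C).obj (chainMax_monotone X).functor

/-!
A natural transformation `f*F ⟶ f*G` is determined by its components at the singleton chains,
because every chain `c` contains the singleton `{max c}` and `f` is constant along this face.
Conversely, those components are natural in `x` because a relation `x ≤ y` is the image under `f`
of the face `{x} ⊆ {x, y}`.
-/

namespace CategoryTheory.Functor

variable {P Q C : Type*} [Category P] [Preorder Q] [Category C] (L : P ⥤ Q)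

theorem faithful_whiskeringLeft_obj_of_surjective (hL : Function.Surjective L.obj) :
    ((whiskeringLeft P Q C).obj L).Faithful where
  map_injective {_ _} β γ h := by
    ext y
    obtain ⟨c, rfl⟩ := hL y
    exact NatTrans.congr_app h c

variable {L} {F G : Q ⥤ C}

theorem app_eq_of_obj_eq (α : L ⋙ F ⟶ L ⋙ G) {c d : P} (g : c ⟶ d) (h : L.obj c = L.obj d) :
    α.app d = eqToHom (congrArg F.obj h.symm) ≫ α.app c ≫ eqToHom (congrArg G.obj h) := by
  have hnat := α.naturality g
  rw [Functor.comp_map, Functor.comp_map, Subsingleton.elim (L.map g) (eqToHom h),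
    eqToHom_map, eqToHom_map] at hnat
  exact (eqToHom_comp_iff _ _ _).mp hnat

variable (L)

theorem full_whiskeringLeft_obj (s : Q → P) (hLs : ∀ y, L.obj (s y) = y)
    (hsL : ∀ c, Nonempty (s (L.obj c) ⟶ c))
    (hzig : ∀ ⦃y z⦄, y ≤ z → ∃ c, Nonempty (s y ⟶ c) ∧ L.obj c = z) :
    ((whiskeringLeft P Q C).obj L).Full where
  map_surjective {F G} α := by
    let β (y : Q) : F.obj y ⟶ G.obj y :=
      eqToHom (congrArg F.obj (hLs y).symm) ≫ α.app (s y) ≫ eqToHom (congrArg G.obj (hLs y))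
    have hαβ (c : P) : α.app c = β (L.obj c) :=
      app_eq_of_obj_eq α (hsL c).some (hLs (L.obj c))
    refine ⟨⟨β, fun y z g ↦ ?_⟩, by ext c; exact (hαβ c).symm⟩
    obtain ⟨c, ⟨i⟩, rfl⟩ := hzig (leOfHom g)
    have hnat : F.map (L.map i) ≫ α.app c = α.app (s y) ≫ G.map (L.map i) := α.naturality i
    rw [← hαβ, Subsingleton.elim g (eqToHom (hLs y).symm ≫ L.map i), F.map_comp, G.map_comp,
      Category.assoc, hnat]
    simp [β, eqToHom_map]

end CategoryTheory.Functor

namespace OrderCx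

variable {X : Type} [PartialOrder X]

def singleton (x : X) : OrderCx X :=
  ⟨{x}, Finset.singleton_nonempty x, by simp⟩

theorem chainMax_eq_of_mem {s : OrderCx X} {m : X} (hm : m ∈ s.1) (hle : ∀ x ∈ s.1, x ≤ m) :
    chainMax X s = m :=
  le_antisymm (hle _ (chainMax_mem X s)) (le_chainMax X s m hm)

theorem chainMax_singleton (x : X) : chainMax X (singleton x) = x :=
  chainMax_eq_of_mem (Finset.mem_singleton_self x) fun _ hy ↦ (Finset.mem_singleton.mp hy).le

theorem singleton_chainMax_le (s : OrderCx X) : singleton (chainMax X s) ≤ s :=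
  Finset.singleton_subset_iff.mpr (chainMax_mem X s)

theorem exists_singleton_le_chainMax_eq {x y : X} (h : x ≤ y) :
    ∃ c : OrderCx X, singleton x ≤ c ∧ chainMax X c = y := by
  classical
  let c : OrderCx X := ⟨{x, y}, Finset.insert_nonempty x {y}, by simpa using IsChain.pair h⟩
  refine ⟨c, Finset.singleton_subset_iff.mpr (Finset.mem_insert_self x {y}), ?_⟩
  refine chainMax_eq_of_mem (Finset.mem_insert_of_mem (Finset.mem_singleton_self y)) ?_
  simp [c, h]

end OrderCx

theorem pullback_orderCx_fullyFaithful_general (X : Type) [PartialOrder X]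
    (C : Type*) [Category C] :
    (pullbackOrderCx X C).Full ∧ (pullbackOrderCx X C).Faithful := by
  constructor
  · refine Functor.full_whiskeringLeft_obj _ OrderCx.singleton OrderCx.chainMax_singleton
      (fun c ↦ ⟨homOfLE (OrderCx.singleton_chainMax_le c)⟩) fun x y h ↦ ?_
    obtain ⟨c, hxc, hcy⟩ := OrderCx.exists_singleton_le_chainMax_eq h
    exact ⟨c, ⟨homOfLE hxc⟩, hcy⟩
  · exact Functor.faithful_whiskeringLeft_obj_of_surjective _
      fun x ↦ ⟨_, OrderCx.chainMax_singleton x⟩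

/-- For a finite poset `X`, the pullback functor
`f* : Shv(X, C) → Shv(K(X), C)` along the projection from the order complex is
fully faithful. -/
theorem pullback_orderCx_fullyFaithful (X : Type) [PartialOrder X] [Fintype X]
    (C : Type*) [Category C] :
    (pullbackOrderCx X C).Full ∧ (pullbackOrderCx X C).Faithful :=
  pullback_orderCx_fullyFaithful_general X C
end

section
/- Let X be a zigzag poset (a finite poset whose Hasse diagram is a path x_0 — x_1 — ... — x_n with arbitrary orientations), F a sheaf of vector spaces on X, and ι : X' ↪ X the inclusion of the alternating subposet consisting of the alternating sequence of minimal and internal maximal elements of X. Then lim F ≅ lim ι*F, where ι*F = F restricted to X'. -/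
open CategoryTheory

/-! Zigzag posets.  A zigzag poset is a finite poset whose Hasse diagram is a path
`x_0 — x_1 — ... — x_n` with arbitrarily oriented edges.  We encode the orientation
of the edge between `x_l` and `x_{l+1}` by `o l : Bool` (`true` means `x_l < x_{l+1}`),
and `x_i ≤ x_j` iff all the edges between them point from `x_i` towards `x_j`. -/

/-- The order relation of the zigzag poset with edge orientations `o`. -/
def zigzagLE (o : ℕ → Bool) (i j : ℕ) : Prop :=
  (i ≤ j ∧ ∀ l, i ≤ l → l < j → o l = true) ∨
  (j ≤ i ∧ ∀ l, j ≤ l → l < i → o l = false)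

theorem zigzagLE_refl (o : ℕ → Bool) (i : ℕ) : zigzagLE o i i :=
  Or.inl ⟨le_rfl, fun _ h1 h2 => absurd (lt_of_le_of_lt h1 h2) (lt_irrefl _)⟩

theorem zigzagLE_trans (o : ℕ → Bool) (i j l : ℕ)
    (h1 : zigzagLE o i j) (h2 : zigzagLE o j l) : zigzagLE o i l := by
  rcases h1 with ⟨hij, hup1⟩ | ⟨hji, hdn1⟩ <;> rcases h2 with ⟨hjl, hup2⟩ | ⟨hlj, hdn2⟩
  · refine Or.inl ⟨le_trans hij hjl, fun m hm1 hm2 => ?_⟩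
    rcases Nat.lt_or_ge m j with h | h
    · exact hup1 m hm1 h
    · exact hup2 m h hm2
  · rcases le_or_gt i l with h | h
    · exact Or.inl ⟨h, fun m hm1 hm2 => hup1 m hm1 (lt_of_lt_of_le hm2 hlj)⟩
    · exact Or.inr ⟨le_of_lt h, fun m hm1 hm2 => hdn2 m hm1 (lt_of_lt_of_le hm2 hij)⟩
  · rcases le_or_gt i l with h | h
    · exact Or.inl ⟨h, fun m hm1 hm2 => hup2 m (le_trans hji hm1) hm2⟩
    · exact Or.inr ⟨le_of_lt h, fun m hm1 hm2 => hdn1 m (le_trans hjl hm1) hm2⟩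
  · refine Or.inr ⟨le_trans hlj hji, fun m hm1 hm2 => ?_⟩
    rcases Nat.lt_or_ge m j with h | h
    · exact hdn2 m hm1 h
    · exact hdn1 m h hm2

theorem zigzagLE_antisymm (o : ℕ → Bool) (i j : ℕ)
    (h1 : zigzagLE o i j) (h2 : zigzagLE o j i) : i = j := by
  rcases h1 with ⟨hij, hup1⟩ | ⟨hji, hdn1⟩ <;>
    rcases h2 with ⟨hji', hup2⟩ | ⟨hij', hdn2⟩
  · omega
  · rcases Nat.lt_or_ge i j with h | h
    · have ht := hup1 i le_rfl h
      have hf := hdn2 i le_rfl h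
      simp [ht] at hf
    · omega
  · rcases Nat.lt_or_ge j i with h | h
    · have ht := hup2 j le_rfl h
      have hf := hdn1 j le_rfl h
      simp [ht] at hf
    · omega
  · omega

/-- The zigzag poset on `{x_0, ..., x_n}` with edge orientations `o`. -/
def Zigzag (n : ℕ) (o : ℕ → Bool) : Type := Fin (n + 1)

instance (n : ℕ) (o : ℕ → Bool) : PartialOrder (Zigzag n o) where
  le i j := zigzagLE o (Fin.val i) (Fin.val j)
  le_refl i := zigzagLE_refl o _
  le_trans i j l := zigzagLE_trans o _ _ _
  le_antisymm i j h1 h2 := Fin.ext (zigzagLE_antisymm o _ _ h1 h2)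

/-- The index of a point of the zigzag poset. -/
def Zigzag.idx {n : ℕ} {o : ℕ → Bool} (x : Zigzag n o) : ℕ := Fin.val x

/-- The alternating subposet `X' ⊆ X`: all minimal elements together with the
internal maximal elements (the maximal elements flanked by minimal elements on
both sides); this is the alternating sequence of minimal and internal maximal
elements of the zigzag. -/
def altSet (n : ℕ) (o : ℕ → Bool) : Set (Zigzag n o) :=
  {x | IsMin x ∨ (IsMax x ∧ (∃ y : Zigzag n o, IsMin y ∧ y.idx < x.idx) ∧
    (∃ y : Zigzag n o, IsMin y ∧ x.idx < y.idx))}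

/-- The alternating subposet, with the induced order. -/
def AltSub (n : ℕ) (o : ℕ → Bool) : Type := {x : Zigzag n o // x ∈ altSet n o}

instance (n : ℕ) (o : ℕ → Bool) : PartialOrder (AltSub n o) :=
  inferInstanceAs (PartialOrder {x : Zigzag n o // x ∈ altSet n o})

/-- The inclusion `ι : X' ↪ X` is order preserving. -/
lemma altIncl_monotone (n : ℕ) (o : ℕ → Bool) :
    Monotone (fun x : AltSub n o => (x.val : Zigzag n o)) := fun _ _ h => h

/-- The restriction (pullback) functor `ι*` of sheaves along the inclusion of the
alternating subposet. -/
noncomputable def restrictAlt (n : ℕ) (o : ℕ → Bool) (C : Type*) [Category C] :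
    (Zigzag n o ⥤ C) ⥤ (AltSub n o ⥤ C) :=
  (Functor.whiskeringLeft (AltSub n o) (Zigzag n o) C).obj (altIncl_monotone n o).functor

open CategoryTheory.Limits

/-! The restriction of a limit along `ι` is the limit of the restriction because `ι` is an
initial functor: for each `x`, the elements of `X'` below `x` form a nonempty directed set.
Nonemptiness is the existence of a minimal element below `x`.  For directedness, a point
of the zigzag lying between `a ≤ x` and `x` is itself above `a`, so of two elements of `X'`
below `x` one is above the other unless they lie on opposite sides of `x`; then `x` is a
peak with minimal elements on both sides, i.e. an internal maximum, and belongs to `X'`. -/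

theorem Monotone.initial_functor_of_directed_below {P Q : Type*} [Preorder P] [Preorder Q]
    {f : P → Q} (hf : Monotone f) (h_nonempty : ∀ x, ∃ a, f a ≤ x)
    (h_directed : ∀ x a b, f a ≤ x → f b ≤ x → ∃ c, f c ≤ x ∧ a ≤ c ∧ b ≤ c) :
    hf.functor.Initial where
  out x := by
    have : IsFiltered (CostructuredArrow hf.functor x) :=
      { cocone_objs := fun j₁ j₂ => by
          obtain ⟨c, hcx, h₁, h₂⟩ :=
            h_directed x j₁.left j₂.left (leOfHom j₁.hom) (leOfHom j₂.hom)
          exact ⟨CostructuredArrow.mk (Y := c) (homOfLE hcx),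
            CostructuredArrow.homMk (homOfLE h₁) (Subsingleton.elim _ _),
            CostructuredArrow.homMk (homOfLE h₂) (Subsingleton.elim _ _), trivial⟩
        cocone_maps := fun _ j _ _ =>
          ⟨j, 𝟙 j, CostructuredArrow.hom_ext _ _ (Subsingleton.elim _ _)⟩
        nonempty := by
          obtain ⟨a, hax⟩ := h_nonempty x
          exact ⟨CostructuredArrow.mk (Y := a) (homOfLE hax)⟩ }
    exact IsFiltered.isConnected _

section zigzagLE

variable {o : ℕ → Bool} {i j k : ℕ}

theorem zigzagLE.edge_eq_true (h : zigzagLE o i j) (hij : i < j) {l : ℕ} (hil : i ≤ l)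
    (hlj : l < j) : o l = true := by
  rcases h with ⟨-, hup⟩ | ⟨hji, -⟩
  · exact hup l hil hlj
  · omega

theorem zigzagLE.edge_eq_false (h : zigzagLE o i j) (hji : j < i) {l : ℕ} (hjl : j ≤ l)
    (hli : l < i) : o l = false := by
  rcases h with ⟨hij, -⟩ | ⟨-, hdown⟩
  · omega
  · exact hdown l hjl hli

theorem zigzagLE.of_between (h : zigzagLE o i j) (hk : i ≤ k ∧ k ≤ j ∨ j ≤ k ∧ k ≤ i) :
    zigzagLE o i k := by
  rcases h with ⟨hij, hup⟩ | ⟨hji, hdown⟩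
  · exact Or.inl ⟨by omega, fun l hil hlk => hup l hil (by omega)⟩
  · exact Or.inr ⟨by omega, fun l hkl hli => hdown l (by omega) hli⟩

end zigzagLE

namespace Zigzag

variable {n : ℕ} {o : ℕ → Bool}

instance : Finite (Zigzag n o) := inferInstanceAs (Finite (Fin (n + 1)))

theorem le_iff {a b : Zigzag n o} : a ≤ b ↔ zigzagLE o a.idx b.idx := Iff.rfl

theorem idx_injective : Function.Injective (idx : Zigzag n o → ℕ) := Fin.val_injective

theorem exists_isMin_le (x : Zigzag n o) : ∃ a ≤ x, IsMin a := by
  obtain ⟨a, hax, ha⟩ := exists_minimal_le_of_wellFoundedLT (fun _ => True) x trivial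
  exact ⟨a, hax, minimal_true.mp ha⟩

theorem le_of_le_of_idx_between {a b x : Zigzag n o} (hax : a ≤ x)
    (hb : a.idx ≤ b.idx ∧ b.idx ≤ x.idx ∨ x.idx ≤ b.idx ∧ b.idx ≤ a.idx) : a ≤ b :=
  le_iff.mpr ((le_iff.mp hax).of_between hb)

theorem isMax_of_le_of_le {a b x : Zigzag n o} (hax : a ≤ x) (hbx : b ≤ x)
    (ha : a.idx < x.idx) (hb : x.idx < b.idx) : IsMax x := by
  have h_left : o (x.idx - 1) = true := (le_iff.mp hax).edge_eq_true ha (by omega) (by omega)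
  have h_right : o x.idx = false := (le_iff.mp hbx).edge_eq_false hb le_rfl hb
  intro y hxy
  refine le_of_eq (idx_injective ?_)
  rcases lt_trichotomy x.idx y.idx with h | h | h
  · have := (le_iff.mp hxy).edge_eq_true h le_rfl h
    simp [h_right] at this
  · exact h.symm
  · have := (le_iff.mp hxy).edge_eq_false h (l := x.idx - 1) (by omega) (by omega)
    simp [h_left] at this

end Zigzag

theorem isMin_of_mem_altSet_of_lt {n : ℕ} {o : ℕ → Bool} {a x : Zigzag n o}
    (ha : a ∈ altSet n o) (hax : a < x) : IsMin a :=
  ha.resolve_right fun h => h.1.not_lt hax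

theorem altSet_exists_upper_bound {n : ℕ} {o : ℕ → Bool} {a b x : Zigzag n o}
    (ha : a ∈ altSet n o) (hb : b ∈ altSet n o) (hax : a ≤ x) (hbx : b ≤ x) :
    ∃ c ∈ altSet n o, c ≤ x ∧ a ≤ c ∧ b ≤ c := by
  wlog hab : a.idx ≤ b.idx generalizing a b
  · obtain ⟨c, hc, hcx, hbc, hac⟩ := this hb ha hbx hax (by omega)
    exact ⟨c, hc, hcx, hac, hbc⟩
  rcases le_or_gt b.idx x.idx with hbx' | hxb
  · exact ⟨b, hb, hbx, Zigzag.le_of_le_of_idx_between hax (Or.inl ⟨hab, hbx'⟩), le_rfl⟩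
  rcases le_or_gt x.idx a.idx with hxa | hax'
  · exact ⟨a, ha, hax, le_rfl, Zigzag.le_of_le_of_idx_between hbx (Or.inr ⟨hxa, hab⟩)⟩
  have hx_max : IsMax x := Zigzag.isMax_of_le_of_le hax hbx hax' hxb
  have ha_min : IsMin a := isMin_of_mem_altSet_of_lt ha
    (hax.lt_of_ne (by rintro rfl; omega))
  have hb_min : IsMin b := isMin_of_mem_altSet_of_lt hb
    (hbx.lt_of_ne (by rintro rfl; omega))
  exact ⟨x, Or.inr ⟨hx_max, ⟨a, ha_min, hax'⟩, ⟨b, hb_min, hxb⟩⟩, le_rfl, hax, hbx⟩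

instance altIncl_initial (n : ℕ) (o : ℕ → Bool) : (altIncl_monotone n o).functor.Initial :=
  (altIncl_monotone n o).initial_functor_of_directed_below
    (fun x => by
      obtain ⟨a, hax, ha⟩ := Zigzag.exists_isMin_le x
      exact ⟨⟨a, Or.inl ha⟩, hax⟩)
    (fun _ a b hax hbx => by
      obtain ⟨c, hc, hcx, hac, hbc⟩ := altSet_exists_upper_bound a.2 b.2 hax hbx
      exact ⟨⟨c, hc⟩, hcx, hac, hbc⟩)

/-- Let `X` be a zigzag poset, `F` a sheaf of vector spaces on `X`,
and `ι : X' ↪ X` the inclusion of the alternating subposet.  Then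
`lim F ≅ lim ι*F`. -/
theorem lim_zigzag_alt_iso (k : Type) [Field k] (n : ℕ) (o : ℕ → Bool)
    (F : Zigzag n o ⥤ ModuleCat k) :
    Nonempty (limit F ≅ limit ((restrictAlt n o (ModuleCat k)).obj F)) :=
  ⟨(Functor.Initial.limitIso (altIncl_monotone n o).functor F).symm⟩
end
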